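/- Let C1 and C2 be copulas with C1(u,v) ≥ uv and C2(u,v) ≤ uv for all (u,v) ∈ [0,1]², and let 0 < θ < 1. Then the diagonal section δ of the glued copula C_{1,2,θ} satisfies: δ(t) ≥ t² for 0 ≤ t ≤ θ, δ(θ) = θ², and δ(t) ≤ t² for θ ≤ t ≤ 1. -/

import Mathlib

def IsCopula (C : ℝ → ℝ → ℝ) : Prop :=
  (∀ u ∈ Set.Icc (0:ℝ) 1, C u 0 = 0) ∧
  (∀ v ∈ Set.Icc (0:ℝ) 1, C 0 v = 0) ∧
  (∀ u ∈ Set.Icc (0:ℝ) 1, C u 1 = u) ∧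
  (∀ v ∈ Set.Icc (0:ℝ) 1, C 1 v = v) ∧
  (∀ u₁ u₂ v₁ v₂ : ℝ, 0 ≤ u₁ → u₁ ≤ u₂ → u₂ ≤ 1 → 0 ≤ v₁ → v₁ ≤ v₂ → v₂ ≤ 1 →
    0 ≤ C u₂ v₂ - C u₂ v₁ - C u₁ v₂ + C u₁ v₁)

noncomputable def glueCopula (C₁ C₂ : ℝ → ℝ → ℝ) (θ : ℝ) (u v : ℝ) : ℝ :=
  if u ≤ θ then θ * C₁ (u / θ) v else (1 - θ) * C₂ ((u - θ) / (1 - θ)) v + θ * v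

/-! The glued copula is a rescaled copy of `C₁` on the strip `[0, θ] × [0, 1]` and of `C₂`
(plus the independent mass `θ v`) on `[θ, 1] × [0, 1]`. Both rescalings map the product
copula `u v` to itself, so the glued copula lies above `u v` on the first strip and below it on
the second; on the diagonal this is `t² ≤ δ(t)` resp. `δ(t) ≤ t²`, and at the seam
`δ(θ) = θ C₁(1, θ) = θ²`. -/

section GlueCopula

variable {C₁ C₂ : ℝ → ℝ → ℝ} {θ u v : ℝ}

theorem glueCopula_of_le (hu : u ≤ θ) :
    glueCopula C₁ C₂ θ u v = θ * C₁ (u / θ) v :=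
  if_pos hu

theorem glueCopula_of_lt (hu : θ < u) :
    glueCopula C₁ C₂ θ u v = (1 - θ) * C₂ ((u - θ) / (1 - θ)) v + θ * v :=
  if_neg hu.not_ge

theorem glueCopula_self (h₁ : IsCopula C₁) (hθ0 : 0 < θ)
    (hv : v ∈ Set.Icc (0:ℝ) 1) : glueCopula C₁ C₂ θ θ v = θ * v := by
  rw [glueCopula_of_le le_rfl, div_self hθ0.ne', h₁.2.2.2.1 v hv]

theorem mul_le_glueCopula (hθ0 : 0 < θ)
    (hPQD : ∀ u ∈ Set.Icc (0:ℝ) 1, ∀ v ∈ Set.Icc (0:ℝ) 1, u * v ≤ C₁ u v)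
    (hu : u ∈ Set.Icc 0 θ) (hv : v ∈ Set.Icc (0:ℝ) 1) :
    u * v ≤ glueCopula C₁ C₂ θ u v := by
  have hscaled : u / θ ∈ Set.Icc (0:ℝ) 1 :=
    ⟨div_nonneg hu.1 hθ0.le, (div_le_one hθ0).2 hu.2⟩
  calc u * v = θ * (u / θ * v) := by field_simp
    _ ≤ θ * C₁ (u / θ) v := mul_le_mul_of_nonneg_left (hPQD _ hscaled v hv) hθ0.le
    _ = glueCopula C₁ C₂ θ u v := (glueCopula_of_le hu.2).symm

theorem glueCopula_le_mul (hθ1 : θ < 1)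
    (hNQD : ∀ u ∈ Set.Icc (0:ℝ) 1, ∀ v ∈ Set.Icc (0:ℝ) 1, C₂ u v ≤ u * v)
    (hu : u ∈ Set.Ioc θ 1) (hv : v ∈ Set.Icc (0:ℝ) 1) :
    glueCopula C₁ C₂ θ u v ≤ u * v := by
  have h1θ : 0 < 1 - θ := sub_pos.2 hθ1
  have hscaled : (u - θ) / (1 - θ) ∈ Set.Icc (0:ℝ) 1 :=
    ⟨div_nonneg (sub_nonneg.2 hu.1.le) h1θ.le, (div_le_one h1θ).2 (by linarith [hu.2])⟩
  calc glueCopula C₁ C₂ θ u v = (1 - θ) * C₂ ((u - θ) / (1 - θ)) v + θ * v :=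
        glueCopula_of_lt hu.1
    _ ≤ (1 - θ) * ((u - θ) / (1 - θ) * v) + θ * v := by
        gcongr
        exact hNQD _ hscaled v hv
    _ = u * v := by field_simp; ring

end GlueCopula

theorem glued_diagonal_sign_general (C₁ C₂ : ℝ → ℝ → ℝ) (θ : ℝ)
    (h₁ : IsCopula C₁) (hθ0 : 0 < θ) (hθ1 : θ < 1)
    (hPQD : ∀ u ∈ Set.Icc (0:ℝ) 1, ∀ v ∈ Set.Icc (0:ℝ) 1, u * v ≤ C₁ u v)
    (hNQD : ∀ u ∈ Set.Icc (0:ℝ) 1, ∀ v ∈ Set.Icc (0:ℝ) 1, C₂ u v ≤ u * v) :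
    (∀ t, 0 ≤ t → t ≤ θ → t ^ 2 ≤ glueCopula C₁ C₂ θ t t) ∧
    glueCopula C₁ C₂ θ θ θ = θ ^ 2 ∧
    (∀ t, θ ≤ t → t ≤ 1 → glueCopula C₁ C₂ θ t t ≤ t ^ 2) := by
  have hseam : glueCopula C₁ C₂ θ θ θ = θ ^ 2 := by
    rw [glueCopula_self h₁ hθ0 ⟨hθ0.le, hθ1.le⟩, sq]
  refine ⟨fun t ht0 htθ => ?_, hseam, fun t htθ ht1 => ?_⟩
  · rw [sq]
    exact mul_le_glueCopula hθ0 hPQD ⟨ht0, htθ⟩ ⟨ht0, htθ.trans hθ1.le⟩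
  · rcases htθ.eq_or_lt with rfl | hθt
    · exact hseam.le
    · rw [sq]
      exact glueCopula_le_mul hθ1 hNQD ⟨hθt, ht1⟩ ⟨hθ0.le.trans hθt.le, ht1⟩

theorem glued_diagonal_sign (C₁ C₂ : ℝ → ℝ → ℝ) (θ : ℝ)
    (h₁ : IsCopula C₁) (h₂ : IsCopula C₂) (hθ0 : 0 < θ) (hθ1 : θ < 1)
    (hPQD : ∀ u ∈ Set.Icc (0:ℝ) 1, ∀ v ∈ Set.Icc (0:ℝ) 1, u * v ≤ C₁ u v)
    (hNQD : ∀ u ∈ Set.Icc (0:ℝ) 1, ∀ v ∈ Set.Icc (0:ℝ) 1, C₂ u v ≤ u * v) :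
    (∀ t, 0 ≤ t → t ≤ θ → t ^ 2 ≤ glueCopula C₁ C₂ θ t t) ∧
    glueCopula C₁ C₂ θ θ θ = θ ^ 2 ∧
    (∀ t, θ ≤ t → t ≤ 1 → glueCopula C₁ C₂ θ t t ≤ t ^ 2) :=
  glued_diagonal_sign_general C₁ C₂ θ h₁ hθ0 hθ1 hPQD hNQD
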